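/- Let q be a complex number with |q| < 1, and let x, y, z, w be complex numbers with |x| < 1, |y| < 1, |z| < 1, |w| < 1, w ≠ 1, and such that z q^r ≠ 1 and w q^r ≠ 1 for every natural number r. Then A(x,y,z,w;q) = x·A(x, y, z, wq; q) + L(y, z; q)/(1 − w) − x·L(xy, z, wq; q). -/

import Mathlib

/-- The double Lambert series `A(x,y,z,w;q)`, written with `m = n + j`. -/
noncomputable def doubleLambert (x y z w q : ℂ) : ℂ :=
  ∑' n : ℕ, ∑' j : ℕ,
    x ^ n * y ^ (n + j) / ((1 - w * q ^ n) * (1 - z * q ^ (n + j)))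

/-- The single Lambert series `L(x,y;q)` with one denominator factor. -/
noncomputable def lambert1 (x y q : ℂ) : ℂ :=
  ∑' n : ℕ, x ^ n / (1 - y * q ^ n)

/-- The single Lambert series `L(x,y₁,y₂;q)` with two denominator factors. -/
noncomputable def lambert2 (x y₁ y₂ q : ℂ) : ℂ :=
  ∑' n : ℕ, x ^ n / ((1 - y₁ * q ^ n) * (1 - y₂ * q ^ n))

lemma denom_lb {q v : ℂ} (hq : ‖q‖ < 1) (hv : ‖v‖ < 1) (r : ℕ) :
    1 - ‖v‖ ≤ ‖1 - v * q ^ r‖ := by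
  have h0 : ‖q‖ ^ r ≤ 1 := pow_le_one₀ (norm_nonneg q) hq.le
  have h1 : ‖v * q ^ r‖ ≤ ‖v‖ := by
    rw [norm_mul, norm_pow]
    nlinarith [norm_nonneg v]
  have h2 := norm_sub_norm_le (1 : ℂ) (v * q ^ r)
  simp only [norm_one] at h2
  linarith

lemma term_norm_le {q v z : ℂ} (hq : ‖q‖ < 1) (hv : ‖v‖ < 1)
    (hz : ‖z‖ < 1) (x y : ℂ) (n j : ℕ) :
    ‖x ^ n * y ^ (n + j) / ((1 - v * q ^ n) * (1 - z * q ^ (n + j)))‖ ≤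
      (‖x‖ * ‖y‖) ^ n /
        ((1 - ‖v‖) * (1 - ‖z‖)) * ‖y‖ ^ j := by
  have hv' : (0:ℝ) < 1 - ‖v‖ := by linarith
  have hz' : (0:ℝ) < 1 - ‖z‖ := by linarith
  rw [norm_div, norm_mul, norm_mul, norm_pow, norm_pow]
  have key : ‖x‖ ^ n * ‖y‖ ^ (n + j) /
      (‖1 - v * q ^ n‖ * ‖1 - z * q ^ (n + j)‖) ≤
      ‖x‖ ^ n * ‖y‖ ^ (n + j) /
      ((1 - ‖v‖) * (1 - ‖z‖)) :=
    div_le_div₀ (by positivity) le_rfl (mul_pos hv' hz')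
      (mul_le_mul (denom_lb hq hv n) (denom_lb hq hz (n + j)) hz'.le (norm_nonneg _))
  calc _ ≤ _ := key
  _ = _ := by rw [pow_add, mul_pow]; ring

lemma inner_summable {q v z y : ℂ} (hq : ‖q‖ < 1) (hv : ‖v‖ < 1)
    (hy : ‖y‖ < 1) (hz : ‖z‖ < 1) (x : ℂ) (n : ℕ) :
    Summable (fun j : ℕ =>
      x ^ n * y ^ (n + j) / ((1 - v * q ^ n) * (1 - z * q ^ (n + j)))) :=
  Summable.of_norm_bounded
    ((summable_geometric_of_lt_one (norm_nonneg y) hy).mul_left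
      ((‖x‖ * ‖y‖) ^ n / ((1 - ‖v‖) * (1 - ‖z‖))))
    (fun j => term_norm_le hq hv hz x y n j)

lemma inner_norm_le {q v z y : ℂ} (hq : ‖q‖ < 1) (hv : ‖v‖ < 1)
    (hy : ‖y‖ < 1) (hz : ‖z‖ < 1) (x : ℂ) (n : ℕ) :
    ‖∑' j : ℕ, x ^ n * y ^ (n + j) / ((1 - v * q ^ n) * (1 - z * q ^ (n + j)))‖ ≤
      (‖x‖ * ‖y‖) ^ n *
        (((1 - ‖v‖) * (1 - ‖z‖))⁻¹ * (1 - ‖y‖)⁻¹) := by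
  have hgs : HasSum (fun j : ℕ => (‖x‖ * ‖y‖) ^ n /
      ((1 - ‖v‖) * (1 - ‖z‖)) * ‖y‖ ^ j)
      ((‖x‖ * ‖y‖) ^ n /
      ((1 - ‖v‖) * (1 - ‖z‖)) * (1 - ‖y‖)⁻¹) :=
    (hasSum_geometric_of_lt_one (norm_nonneg y) hy).mul_left _
  have hb := tsum_of_norm_bounded hgs (fun j => term_norm_le hq hv hz x y n j)
  calc _ ≤ _ := hb
  _ = _ := by rw [div_eq_mul_inv]; ring

lemma outer_summable {q v z x y : ℂ} (hq : ‖q‖ < 1) (hv : ‖v‖ < 1)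
    (hx : ‖x‖ < 1) (hy : ‖y‖ < 1) (hz : ‖z‖ < 1) :
    Summable (fun n : ℕ => ∑' j : ℕ,
      x ^ n * y ^ (n + j) / ((1 - v * q ^ n) * (1 - z * q ^ (n + j)))) := by
  have hxy : ‖x‖ * ‖y‖ < 1 := by
    nlinarith [norm_nonneg x, norm_nonneg y]
  exact Summable.of_norm_bounded
    ((summable_geometric_of_lt_one (by positivity) hxy).mul_right
      (((1 - ‖v‖) * (1 - ‖z‖))⁻¹ * (1 - ‖y‖)⁻¹))
    (fun n => inner_norm_le hq hv hy hz x n)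

theorem stmt5 (q x y z w : ℂ) (hq : ‖q‖ < 1)
    (hx : ‖x‖ < 1) (hy : ‖y‖ < 1)
    (hz : ‖z‖ < 1) (hw : ‖w‖ < 1) (hw1 : w ≠ 1)
    (hz' : ∀ r : ℕ, z * q ^ r ≠ 1) (hw' : ∀ r : ℕ, w * q ^ r ≠ 1) :
    doubleLambert x y z w q =
      x * doubleLambert x y z (w * q) q + lambert1 y z q / (1 - w)
        - x * lambert2 (x * y) z (w * q) q := by
  have hwq : ‖w * q‖ < 1 := by
    rw [norm_mul]
    nlinarith [norm_nonneg w, norm_nonneg q]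
  set F : ℕ → ℕ → ℂ := fun n j =>
    x ^ n * y ^ (n + j) / ((1 - w * q ^ n) * (1 - z * q ^ (n + j))) with hF
  set G : ℕ → ℕ → ℂ := fun n j =>
    x ^ n * y ^ (n + j) / ((1 - w * q * q ^ n) * (1 - z * q ^ (n + j))) with hG
  set f : ℕ → ℂ := fun n => ∑' j, F n j with hf
  set g : ℕ → ℂ := fun n => ∑' j, G n j with hg
  set h : ℕ → ℂ := fun n => (x * y) ^ n / ((1 - z * q ^ n) * (1 - w * q * q ^ n)) with hh
  have hSf : Summable f := outer_summable hq hw hx hy hz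
  have hSg : Summable g := outer_summable hq hwq hx hy hz
  have hSh : Summable h := by
    have hxy : ‖x‖ * ‖y‖ < 1 := by
      nlinarith [norm_nonneg x, norm_nonneg y]
    have hz0 : (0:ℝ) < 1 - ‖z‖ := by linarith
    have hw0 : (0:ℝ) < 1 - ‖w * q‖ := by linarith
    apply Summable.of_norm_bounded
      ((summable_geometric_of_lt_one (by positivity) hxy).mul_right
        (((1 - ‖z‖) * (1 - ‖w * q‖))⁻¹))
    intro n
    have h1 : (1:ℝ) - ‖z‖ ≤ ‖1 - z * q ^ n‖ := denom_lb hq hz n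
    have h2 : (1:ℝ) - ‖w * q‖ ≤ ‖1 - w * q * q ^ n‖ :=
      denom_lb hq hwq n
    have key : ‖(x * y) ^ n‖ / (‖1 - z * q ^ n‖ *
        ‖1 - w * q * q ^ n‖) ≤ (‖x‖ * ‖y‖) ^ n /
        ((1 - ‖z‖) * (1 - ‖w * q‖)) := by
      rw [norm_pow, norm_mul]
      exact div_le_div₀ (by positivity) le_rfl (mul_pos hz0 hw0)
        (mul_le_mul h1 h2 hw0.le (norm_nonneg _))
    rw [hh, norm_div, norm_mul]
    calc _ ≤ _ := key
    _ = _ := by rw [div_eq_mul_inv]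
  -- step 1: split off n = 0
  have step1 : doubleLambert x y z w q = f 0 + ∑' n, f (n + 1) := Summable.tsum_eq_zero_add hSf
  -- f 0 = lambert1 y z q / (1 - w)
  have f0 : f 0 = lambert1 y z q / (1 - w) := by
    rw [lambert1, ← tsum_div_const]
    show (∑' j, F 0 j) = _
    refine tsum_congr fun j => ?_
    simp only [hF, pow_zero, one_mul, zero_add, mul_one]
    rw [div_div, mul_comm (1 - z * q ^ j)]
  -- per-n identity
  have hstep : ∀ n : ℕ, f (n + 1) = x * g n - x * h n := by
    intro n
    have hIs : Summable (fun j => G n j) := inner_summable hq hwq hy hz x n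
    have hsplit : g n = G n 0 + ∑' j, G n (j + 1) := Summable.tsum_eq_zero_add hIs
    have hG0 : G n 0 = h n := by
      simp only [hG, hh, add_zero, mul_pow]
      rw [mul_comm (1 - w * q * q ^ n)]
    have hterm : ∀ j : ℕ, F (n + 1) j = x * G n (j + 1) := by
      intro j
      simp only [hF, hG]
      rw [show n + 1 + j = n + (j + 1) by ring, pow_succ x n,
        show w * q ^ (n + 1) = w * q * q ^ n by rw [pow_succ]; ring]
      ring
    calc f (n + 1) = ∑' j, x * G n (j + 1) := tsum_congr hterm
      _ = x * ∑' j, G n (j + 1) := tsum_mul_left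
      _ = x * (g n - G n 0) := by rw [hsplit]; ring
      _ = x * g n - x * h n := by rw [hG0]; ring
  -- sum over n
  have step2 : ∑' n, f (n + 1) = x * doubleLambert x y z (w * q) q
      - x * lambert2 (x * y) z (w * q) q := by
    have hA : doubleLambert x y z (w * q) q = ∑' n, g n := by rw [doubleLambert]

    have hL : lambert2 (x * y) z (w * q) q = ∑' n, h n := by rw [lambert2]
    calc ∑' n, f (n + 1) = ∑' n, (x * g n - x * h n) := tsum_congr hstep
      _ = ∑' n, x * g n - ∑' n, x * h n := Summable.tsum_sub (hSg.mul_left x) (hSh.mul_left x)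
      _ = x * ∑' n, g n - x * ∑' n, h n := by rw [tsum_mul_left, tsum_mul_left]
      _ = _ := by rw [hA, hL]
  rw [step1, f0, step2]; ring
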